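/- With Leontief utilities, let P* = (p*_1, …, p*_n) be a profile and q a distribution such that every agent's peak places 0 on every alternative that is not critical for her under q (i.e., for all agents i and alternatives j, j ∉ T_{q,i} implies p*_{i,j} = 0). If q satisfies weak core fair share at P*, then q maximizes the Nash product at P*. -/

import Mathlib

/-- Leontief utility of an agent with peak `p` at distribution `q`:
the minimum of `q j / p j` over alternatives `j` with `p j > 0`. -/
noncomputable def leontief {m : ℕ} (p q : Fin m → ℝ) : ℝ :=
  sInf {x : ℝ | ∃ j, 0 < p j ∧ x = q j / p j}

/-- `q` satisfies core fair share at profile `P` (with Leontief utilities). -/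
def CoreFairShare {m n : ℕ} (P : Fin n → Fin m → ℝ) (q : Fin m → ℝ) : Prop :=
  ¬ ∃ (N' : Finset (Fin n)) (q' : Fin m → ℝ), N'.Nonempty ∧
      q' ∈ stdSimplex ℝ (Fin m) ∧
      ∀ q'' ∈ stdSimplex ℝ (Fin m),
        (∀ i ∈ N', leontief (P i) q ≤
          leontief (P i) (((N'.card : ℝ) / (n : ℝ)) • q' +
            (1 - (N'.card : ℝ) / (n : ℝ)) • q'')) ∧
        (∃ i ∈ N', leontief (P i) q <
          leontief (P i) (((N'.card : ℝ) / (n : ℝ)) • q' +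
            (1 - (N'.card : ℝ) / (n : ℝ)) • q''))

/-- `q` satisfies weak core fair share at profile `P` (with Leontief utilities). -/
def WeakCoreFairShare {m n : ℕ} (P : Fin n → Fin m → ℝ) (q : Fin m → ℝ) : Prop :=
  ¬ ∃ (N' : Finset (Fin n)) (q' : Fin m → ℝ), N'.Nonempty ∧
      q' ∈ stdSimplex ℝ (Fin m) ∧
      ∀ q'' ∈ stdSimplex ℝ (Fin m), ∀ i ∈ N',
        leontief (P i) q <
          leontief (P i) (((N'.card : ℝ) / (n : ℝ)) • q' +
            (1 - (N'.card : ℝ) / (n : ℝ)) • q'')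

-- The set of critical alternatives of an agent with peak `p` under distribution `q`:
-- the alternatives attaining the minimum of `q j / p j` over `j` with `p j > 0`.
open Classical in
noncomputable def criticalSet {m : ℕ} (p q : Fin m → ℝ) : Finset (Fin m) :=
  Finset.univ.filter (fun j => 0 < p j ∧ ∀ k, 0 < p k → q j / p j ≤ q k / p k)

/-- `q` maximizes the Nash product of Leontief utilities at profile `P`. -/
def NashMax {m n : ℕ} (P : Fin n → Fin m → ℝ) (q : Fin m → ℝ) : Prop :=
  q ∈ stdSimplex ℝ (Fin m) ∧
    ∀ q' ∈ stdSimplex ℝ (Fin m), ∏ i, leontief (P i) q' ≤ ∏ i, leontief (P i) q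

/-!
Because every peak is supported on critical alternatives, `q` is proportional to `P i` on the
support of `P i`, with factor `uᵢ = leontief (P i) q`. Weak core fair share gives `uᵢ > 0`
(otherwise `{i}` blocks with its own peak) and a Hall-type condition: a coalition `S` gets
`q`-mass at least `|S| / n` on any set containing the supports of its members (otherwise
`S` blocks with `q` conditioned on that set). For a competitor `q'` put
`ρᵢ = uᵢ(q') / uᵢ` and `xⱼ = q'ⱼ / qⱼ`. Then `ρᵢ ≤ xⱼ` on the support of `P i`, so the Hall
condition holds for the level sets `{ρ > t} ⊆ {x > t}`, and integrating over `t` (layer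
cake) gives `∑ ρᵢ / n ≤ ∑ qⱼ xⱼ ≤ 1`. AM–GM then yields `∏ ρᵢ ≤ 1`.
-/

open Finset MeasureTheory

lemma exists_pos_of_mem_stdSimplex {ι : Type*} [Fintype ι] {p : ι → ℝ}
    (hp : p ∈ stdSimplex ℝ ι) : ∃ j, 0 < p j := by
  have hsum : ∑ j, (0 : ι → ℝ) j < ∑ j, p j := by simp [hp.2]
  obtain ⟨j, -, hj⟩ := exists_lt_of_sum_lt hsum
  exact ⟨j, hj⟩

section Leontief

variable {m : ℕ}

lemma leontief_le (p q : Fin m → ℝ) {j : Fin m} (hj : 0 < p j) :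
    leontief p q ≤ q j / p j := by
  have hfin : {x : ℝ | ∃ k, 0 < p k ∧ x = q k / p k}.Finite :=
    (Set.finite_range fun k => q k / p k).subset (by rintro _ ⟨k, -, rfl⟩; exact ⟨k, rfl⟩)
  exact csInf_le hfin.bddBelow ⟨j, hj, rfl⟩

lemma le_leontief {p : Fin m → ℝ} (q : Fin m → ℝ) {c : ℝ} (hp : ∃ j, 0 < p j)
    (h : ∀ j, 0 < p j → c ≤ q j / p j) : c ≤ leontief p q := by
  obtain ⟨j, hj⟩ := hp
  exact le_csInf ⟨q j / p j, j, hj, rfl⟩ (by rintro _ ⟨k, hk, rfl⟩; exact h k hk)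

lemma leontief_nonneg {p q : Fin m → ℝ} (hp : ∃ j, 0 < p j) (hq : ∀ j, 0 ≤ q j) :
    0 ≤ leontief p q :=
  le_leontief q hp fun j hj => div_nonneg (hq j) hj.le

lemma leontief_eq_of_forall_eq_mul {p q : Fin m → ℝ} {c : ℝ} (hp : ∃ j, 0 < p j)
    (h : ∀ j, 0 < p j → q j = c * p j) : leontief p q = c := by
  have hratio : ∀ j, 0 < p j → q j / p j = c := fun j hj => by
    rw [h j hj, mul_div_cancel_right₀ _ hj.ne']
  obtain ⟨j, hj⟩ := hp
  exact le_antisymm ((leontief_le p q hj).trans_eq (hratio j hj))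
    (le_leontief q ⟨j, hj⟩ fun k hk => (hratio k hk).ge)

lemma leontief_self {p : Fin m → ℝ} (hp : ∃ j, 0 < p j) : leontief p p = 1 :=
  leontief_eq_of_forall_eq_mul hp fun _ _ => (one_mul _).symm

lemma eq_leontief_mul_of_mem_criticalSet {p q : Fin m → ℝ} {j : Fin m}
    (hj : j ∈ criticalSet p q) : q j = leontief p q * p j := by
  obtain ⟨-, hpj, hmin⟩ := mem_filter.1 hj
  have hmin_eq : leontief p q = q j / p j :=
    le_antisymm (leontief_le p q hpj) (le_leontief q ⟨j, hpj⟩ hmin)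
  rw [hmin_eq, div_mul_cancel₀ _ hpj.ne']

lemma mul_leontief_le_leontief_smul_add {p : Fin m → ℝ} (hp : ∃ j, 0 < p j)
    {q q'' : Fin m → ℝ} {r : ℝ} (hr : 0 ≤ r) (hq'' : ∀ j, 0 ≤ q'' j) :
    r * leontief p q ≤ leontief p (r • q + q'') :=
  le_leontief _ hp fun j hj => calc
    r * leontief p q ≤ r * (q j / p j) := mul_le_mul_of_nonneg_left (leontief_le p q hj) hr
    _ = r * q j / p j := (mul_div_assoc _ _ _).symm
    _ ≤ (r • q + q'') j / p j := by
      gcongr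
      simpa using hq'' j

lemma leontief_div_le_div {p q : Fin m → ℝ} (q' : Fin m → ℝ) (hu : 0 < leontief p q)
    {j : Fin m} (hj : 0 < p j) (hqj : q j = leontief p q * p j) :
    leontief p q' / leontief p q ≤ q' j / q j := by
  rw [hqj, mul_comm, ← div_div]
  exact div_le_div_of_nonneg_right (leontief_le p q' hj) hu.le

end Leontief

namespace WeakCoreFairShare

variable {m n : ℕ} {P : Fin n → Fin m → ℝ} {q : Fin m → ℝ}

theorem exists_mul_leontief_le (h : WeakCoreFairShare P q) (hP : ∀ i, ∃ j, 0 < P i j)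
    {N' : Finset (Fin n)} (hN' : N'.Nonempty) {q' : Fin m → ℝ}
    (hq' : q' ∈ stdSimplex ℝ (Fin m)) :
    ∃ i ∈ N', (#N' / n : ℝ) * leontief (P i) q' ≤ leontief (P i) q := by
  by_contra! hblock
  refine h ⟨N', q', hN', hq', fun q'' hq'' i hi => (hblock i hi).trans_le ?_⟩
  have hr : (#N' / n : ℝ) ≤ 1 :=
    div_le_one_of_le₀ (by exact_mod_cast (card_le_univ N').trans_eq (Fintype.card_fin n))
      n.cast_nonneg
  exact mul_leontief_le_leontief_smul_add (hP i) (by positivity)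
    fun j => mul_nonneg (sub_nonneg.2 hr) (hq''.1 j)

theorem leontief_pos (h : WeakCoreFairShare P q) (hP : ∀ i, P i ∈ stdSimplex ℝ (Fin m))
    (i : Fin n) : 0 < leontief (P i) q := by
  have hP' := fun i => exists_pos_of_mem_stdSimplex (hP i)
  obtain ⟨k, hk, hle⟩ := h.exists_mul_leontief_le hP' (singleton_nonempty i) (hP i)
  rw [mem_singleton] at hk
  subst hk
  rw [card_singleton, leontief_self (hP' k), mul_one, Nat.cast_one] at hle
  have : 0 < n := Fin.pos k
  exact lt_of_lt_of_le (by positivity) hle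

theorem card_div_le_sum (h : WeakCoreFairShare P q) (hP : ∀ i, P i ∈ stdSimplex ℝ (Fin m))
    (hq : q ∈ stdSimplex ℝ (Fin m))
    (hprop : ∀ i j, 0 < P i j → q j = leontief (P i) q * P i j)
    {S : Finset (Fin n)} {T : Finset (Fin m)} (hT : ∀ i ∈ S, ∀ j, 0 < P i j → j ∈ T) :
    (#S / n : ℝ) ≤ ∑ j ∈ T, q j := by
  have hP' := fun i => exists_pos_of_mem_stdSimplex (hP i)
  set Q := ∑ j ∈ T, q j
  by_contra! hQ
  obtain ⟨i₀, hi₀⟩ := S.eq_empty_or_nonempty.resolve_left fun hS => by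
    subst hS
    exact (sum_nonneg fun j _ => hq.1 j).not_gt (by simpa using hQ)
  have hQpos : 0 < Q := by
    obtain ⟨j, hj⟩ := hP' i₀
    refine sum_pos' (fun k _ => hq.1 k) ⟨j, hT i₀ hi₀ j hj, ?_⟩
    rw [hprop i₀ j hj]
    exact mul_pos (h.leontief_pos hP i₀) hj
  set qT : Fin m → ℝ := fun j => if j ∈ T then q j / Q else 0
  have hqT : qT ∈ stdSimplex ℝ (Fin m) := by
    refine ⟨fun j => ?_, ?_⟩
    · by_cases hj : j ∈ T <;> simp only [qT, hj, if_true, if_false, le_refl]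
      exact div_nonneg (hq.1 j) hQpos.le
    · simp only [qT, sum_ite_mem, univ_inter, ← sum_div]
      exact div_self hQpos.ne'
  obtain ⟨i, hi, hle⟩ := h.exists_mul_leontief_le hP' ⟨i₀, hi₀⟩ hqT
  have hL : leontief (P i) qT = leontief (P i) q / Q :=
    leontief_eq_of_forall_eq_mul (hP' i) fun j hj => by
      simp only [qT, if_pos (hT i hi j hj), hprop i j hj]
      ring
  rw [hL, mul_div_assoc', div_le_iff₀ hQpos] at hle
  nlinarith [h.leontief_pos hP i]

end WeakCoreFairShare

section LayerCake

variable {ι : Type*} [Fintype ι]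

lemma sum_indicator_Ico_of_nonneg (v ρ : ι → ℝ) {t : ℝ} (ht : 0 ≤ t) :
    ∑ i, (Set.Ico 0 (ρ i)).indicator (fun _ => v i) t = ∑ i ∈ univ.filter (t < ρ ·), v i := by
  simp only [Set.indicator_apply, Set.mem_Ico, ht, true_and, sum_filter]

lemma sum_indicator_Ico_of_neg (v ρ : ι → ℝ) {t : ℝ} (ht : t < 0) :
    ∑ i, (Set.Ico 0 (ρ i)).indicator (fun _ => v i) t = 0 :=
  sum_eq_zero fun _ _ => Set.indicator_of_notMem (fun hmem => ht.not_ge hmem.1) _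

lemma integrable_sum_indicator_Ico (v ρ : ι → ℝ) :
    Integrable fun t => ∑ i, (Set.Ico 0 (ρ i)).indicator (fun _ => v i) t :=
  integrable_finsetSum _ fun _ _ =>
    (integrable_indicator_iff measurableSet_Ico).2 (integrableOn_const measure_Ico_lt_top.ne)

lemma integral_sum_indicator_Ico (v : ι → ℝ) {ρ : ι → ℝ} (hρ : ∀ i, 0 ≤ ρ i) :
    ∫ t, ∑ i, (Set.Ico 0 (ρ i)).indicator (fun _ => v i) t = ∑ i, v i * ρ i := by
  rw [integral_finsetSum _ fun _ _ =>
    (integrable_indicator_iff measurableSet_Ico).2 (integrableOn_const measure_Ico_lt_top.ne)]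
  refine sum_congr rfl fun i _ => ?_
  rw [integral_indicator_const _ measurableSet_Ico, Real.volume_real_Ico, sub_zero,
    max_eq_left (hρ i), smul_eq_mul, mul_comm]

theorem sum_mul_le_sum_mul_of_sum_filter_lt_le {κ : Type*} [Fintype κ] {v ρ : ι → ℝ}
    {w x : κ → ℝ} (hρ : ∀ i, 0 ≤ ρ i) (hx : ∀ j, 0 ≤ x j)
    (h : ∀ t, 0 ≤ t → ∑ i ∈ univ.filter (t < ρ ·), v i ≤ ∑ j ∈ univ.filter (t < x ·), w j) :
    ∑ i, v i * ρ i ≤ ∑ j, w j * x j := by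
  rw [← integral_sum_indicator_Ico v hρ, ← integral_sum_indicator_Ico w hx]
  refine integral_mono (integrable_sum_indicator_Ico v ρ) (integrable_sum_indicator_Ico w x)
    fun t => ?_
  rcases lt_or_ge t 0 with ht | ht
  · simp only [sum_indicator_Ico_of_neg _ _ ht, le_refl]
  · simpa only [sum_indicator_Ico_of_nonneg _ _ ht] using h t ht

end LayerCake

theorem prod_le_one_of_sum_inv_card_mul_le_one {ι : Type*} [Fintype ι] {ρ : ι → ℝ}
    (hρ : ∀ i, 0 ≤ ρ i) (h : ∑ i, (Fintype.card ι : ℝ)⁻¹ * ρ i ≤ 1) : ∏ i, ρ i ≤ 1 := by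
  rcases isEmpty_or_nonempty ι with _ | _
  · simp
  have hw : ∑ _i : ι, (Fintype.card ι : ℝ)⁻¹ = 1 := by
    rw [sum_const, card_univ, nsmul_eq_mul, mul_inv_cancel₀ (by positivity)]
  have hamgm := Real.geom_mean_le_arith_mean_weighted univ _ ρ (fun _ _ => by positivity) hw
    fun i _ => hρ i
  rw [Real.finsetProd_rpow _ _ fun i _ => hρ i] at hamgm
  by_contra! hgt
  exact (Real.one_lt_rpow hgt (by positivity)).not_ge (hamgm.trans h)

lemma sum_mul_div_le_sum {ι : Type*} [Fintype ι] {a b : ι → ℝ} (hb : ∀ i, 0 ≤ b i) :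
    ∑ i, a i * (b i / a i) ≤ ∑ i, b i := by
  refine sum_le_sum fun i _ => ?_
  rcases eq_or_ne (a i) 0 with ha | ha
  · simpa [ha] using hb i
  · rw [mul_div_cancel₀ _ ha]

/-- with Leontief utilities, if at profile `P*` every agent's peak places
`0` on every alternative that is not critical for her under `q`, and `q` satisfies weak
core fair share at `P*`, then `q` maximizes the Nash product at `P*`. -/
theorem weak_cfs_on_critical_profile_implies_nash_max {m n : ℕ}
    (Pstar : Fin n → Fin m → ℝ) (hPstar : ∀ i, Pstar i ∈ stdSimplex ℝ (Fin m))
    (q : Fin m → ℝ) (hq : q ∈ stdSimplex ℝ (Fin m))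
    (hcrit : ∀ i j, j ∉ criticalSet (Pstar i) q → Pstar i j = 0)
    (hwcfs : WeakCoreFairShare Pstar q) :
    NashMax Pstar q := by
  refine ⟨hq, fun q' hq' => ?_⟩
  have hu := hwcfs.leontief_pos hPstar
  have hprop : ∀ i j, 0 < Pstar i j → q j = leontief (Pstar i) q * Pstar i j := fun i j hj =>
    eq_leontief_mul_of_mem_criticalSet (not_not.1 fun h => hj.ne' (hcrit i j h))
  set ρ := fun i => leontief (Pstar i) q' / leontief (Pstar i) q
  have hρ : ∀ i, 0 ≤ ρ i := fun i =>
    div_nonneg (leontief_nonneg (exists_pos_of_mem_stdSimplex (hPstar i)) hq'.1) (hu i).le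
  have hsum : ∑ i, (n : ℝ)⁻¹ * ρ i ≤ ∑ j, q j * (q' j / q j) := by
    refine sum_mul_le_sum_mul_of_sum_filter_lt_le hρ (fun j => div_nonneg (hq'.1 j) (hq.1 j))
      fun t _ => ?_
    rw [sum_const, nsmul_eq_mul, ← div_eq_mul_inv]
    refine hwcfs.card_div_le_sum hPstar hq hprop fun i hi j hj => ?_
    rw [mem_filter] at hi ⊢
    exact ⟨mem_univ j, hi.2.trans_le (leontief_div_le_div q' (hu i) hj (hprop i j hj))⟩
  have hprod : ∏ i, ρ i ≤ 1 := prod_le_one_of_sum_inv_card_mul_le_one hρ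
    (by simpa using hsum.trans ((sum_mul_div_le_sum hq'.1).trans_eq hq'.2))
  rwa [prod_div_distrib, div_le_one (prod_pos fun i _ => hu i)] at hprod
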